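/- Let M be a finite extension of a number field A, and let F_1 and F_2 be finite extensions of M inside a common algebraic closure. Suppose F_1 is Galois over M and that there is a prime 𝔭 of A such that 𝔭 does not ramify in F_2 but 𝔭 ramifies in every nontrivial extension of M contained in F_1. Then Gal(F_1F_2 / F_2) ≅ Gal(F_1 / M), and moreover 𝔭 ramifies in every nontrivial extension of F_2 contained in F_1F_2. -/

import Mathlib

open Polynomial IntermediateField NumberField IsDedekindDomain

noncomputable section

/-- The Galois group of `E ⊔ F` over `E`; when `E ≤ F` this is `Gal(F/E)`. -/
def relGal {K L : Type*} [Field K] [Field L] [Algebra K L] (E F : IntermediateField K L) :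
    Type _ :=
  ↥(IntermediateField.extendScalars (le_sup_left : E ≤ E ⊔ F)) ≃ₐ[↥E]
    ↥(IntermediateField.extendScalars (le_sup_left : E ≤ E ⊔ F))

instance {K L : Type*} [Field K] [Field L] [Algebra K L] (E F : IntermediateField K L) :
    Group (relGal E F) :=
  inferInstanceAs (Group (_ ≃ₐ[_] _))

/-- A nonzero prime `v` of a number field `A` ramifies in an extension `B` of `A` (along the
embedding `σ : A →+* B`) if some prime of the ring of integers of `B` lying over `v` has
ramification index greater than `1`. -/
def RamifiesIn {A B : Type*} [Field A] [NumberField A] [Field B] (σ : A →+* B)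
    (v : HeightOneSpectrum (𝓞 A)) : Prop :=
  ∃ Q : Ideal (𝓞 B), Q.IsMaximal ∧
    Q.comap (RingOfIntegers.mapRingHom σ) = v.asIdeal ∧
    1 < sSup {n : ℕ | Ideal.map (RingOfIntegers.mapRingHom σ) v.asIdeal ≤ Q ^ n}

/-- A nonzero prime `v` of a number field `A` is unramified in an extension `B` of `A` (along
the embedding `σ : A →+* B`) if every prime of the ring of integers of `B` lying over `v` has
ramification index `1`. -/
def UnramifiedIn {A B : Type*} [Field A] [NumberField A] [Field B] (σ : A →+* B)
    (v : HeightOneSpectrum (𝓞 A)) : Prop :=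
  ∀ Q : Ideal (𝓞 B), Q.IsMaximal →
    Q.comap (RingOfIntegers.mapRingHom σ) = v.asIdeal →
    sSup {n : ℕ | Ideal.map (RingOfIntegers.mapRingHom σ) v.asIdeal ≤ Q ^ n} = 1

end


-- ==================== auxiliary number-theoretic lemmas ====================

section NT
variable {A B C : Type*} [Field A] [NumberField A] [Field B] [NumberField B]
  [Field C] [NumberField C]

omit [NumberField A] [NumberField B] in
lemma mapRingHom_injective' (σ : B →+* C) :
    Function.Injective (RingOfIntegers.mapRingHom σ) := fun x y h =>
  RingOfIntegers.ext (σ.injective (congrArg (fun t : 𝓞 C => (t : C)) h))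

omit [NumberField A] [NumberField B] in
lemma mapRingHom_ker' (σ : B →+* C) :
    RingHom.ker (RingOfIntegers.mapRingHom σ) = ⊥ :=
  RingHom.ker_eq_bot_iff_eq_zero _ |>.mpr fun x hx =>
    (mapRingHom_injective' σ) (by simpa using hx)

lemma exists_prime_lift (f : A →+* B) (g : B →+* C)
    (v : IsDedekindDomain.HeightOneSpectrum (𝓞 A)) (Q : Ideal (𝓞 B)) (hQ : Q.IsMaximal)
    (hQv : Q.comap (RingOfIntegers.mapRingHom f) = v.asIdeal) :
    ∃ Q' : Ideal (𝓞 C), Q'.IsMaximal ∧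
      Q'.comap (RingOfIntegers.mapRingHom (g.comp f)) = v.asIdeal ∧
      sSup {n : ℕ | Ideal.map (RingOfIntegers.mapRingHom (g.comp f)) v.asIdeal ≤ Q' ^ n} =
        sSup {n : ℕ | Ideal.map (RingOfIntegers.mapRingHom f) v.asIdeal ≤ Q ^ n} *
        sSup {n : ℕ | Ideal.map (RingOfIntegers.mapRingHom g) Q ≤ Q' ^ n} ∧
      sSup {n : ℕ | Ideal.map (RingOfIntegers.mapRingHom g) Q ≤ Q' ^ n} ≠ 0 := by
  letI : Algebra B C := g.toAlgebra
  have halg : algebraMap (𝓞 B) (𝓞 C) = RingOfIntegers.mapRingHom g := rfl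
  haveI := hQ
  have hQ0 : Q ≠ ⊥ := by
    rintro rfl
    exact v.ne_bot (by rw [← hQv, Ideal.comap_bot_of_injective _ (mapRingHom_injective' f)])
  obtain ⟨Q', hQ'max, hQ'c⟩ := Ideal.exists_ideal_over_maximal_of_isIntegral Q
    (by rw [halg, mapRingHom_ker']; exact bot_le)
  rw [halg] at hQ'c
  haveI : Q.IsPrime := hQ.isPrime
  haveI : Q'.IsPrime := hQ'max.isPrime
  have hg0 : Ideal.map (RingOfIntegers.mapRingHom g) Q ≠ ⊥ := by
    rw [Ne, Ideal.map_eq_bot_iff_le_ker, mapRingHom_ker', le_bot_iff]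
    exact hQ0
  have hg : Ideal.map (RingOfIntegers.mapRingHom g) Q ≤ Q' := by
    rw [← hQ'c]; exact Ideal.map_comap_le
  have hfg : Ideal.map (RingOfIntegers.mapRingHom (g.comp f)) v.asIdeal ≠ ⊥ := by
    rw [Ne, Ideal.map_eq_bot_iff_le_ker, mapRingHom_ker', le_bot_iff]
    exact v.ne_bot
  have hcomp : RingOfIntegers.mapRingHom (g.comp f) =
      (RingOfIntegers.mapRingHom g).comp (RingOfIntegers.mapRingHom f) := rfl
  refine ⟨Q', hQ'max, ?_, ?_, ?_⟩
  · rw [hcomp, ← Ideal.comap_comap, hQ'c, hQv]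
  · rw [hcomp]
    letI : Algebra (𝓞 A) (𝓞 B) := (RingOfIntegers.mapRingHom f).toAlgebra
    letI : Algebra (𝓞 A) (𝓞 C) :=
      ((RingOfIntegers.mapRingHom g).comp (RingOfIntegers.mapRingHom f)).toAlgebra
    haveI : IsScalarTower (𝓞 A) (𝓞 B) (𝓞 C) := IsScalarTower.of_algebraMap_eq (fun _ => rfl)
    exact Ideal.ramificationIdx'_algebra_tower (p := v.asIdeal) hg0 hfg hg
  · exact Ideal.IsDedekindDomain.ramificationIdx'_ne_zero hg0 ‹Q'.IsPrime› hg

lemma RamifiesIn.comp' (f : A →+* B) (g : B →+* C) (v : IsDedekindDomain.HeightOneSpectrum (𝓞 A))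
    (h : RamifiesIn f v) : RamifiesIn (g.comp f) v := by
  obtain ⟨Q, hQ, hQv, hlt⟩ := h
  obtain ⟨Q', hQ', hQ'v, hmul, hne⟩ := exists_prime_lift f g v Q hQ hQv
  exact ⟨Q', hQ', hQ'v, by
    rw [hmul]
    exact lt_of_lt_of_le hlt (Nat.le_mul_of_pos_right _ (Nat.pos_of_ne_zero hne))⟩

lemma UnramifiedIn.comp' (f : A →+* B) (g : B →+* C) (v : IsDedekindDomain.HeightOneSpectrum (𝓞 A))
    (h : UnramifiedIn (g.comp f) v) : UnramifiedIn f v := by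
  intro Q hQ hQv
  obtain ⟨Q', hQ', hQ'v, hmul, hne⟩ := exists_prime_lift f g v Q hQ hQv
  have h1 := h Q' hQ' hQ'v
  rw [hmul] at h1
  exact Nat.eq_one_of_mul_eq_one_right h1

omit [NumberField B] in
lemma not_ramifiesIn_of_unramifiedIn (f : A →+* B) (v : IsDedekindDomain.HeightOneSpectrum (𝓞 A))
    (h : UnramifiedIn f v) : ¬ RamifiesIn f v := by
  rintro ⟨Q, hQ, hQv, hlt⟩
  rw [h Q hQ hQv] at hlt
  exact lt_irrefl 1 hlt
end NT

-- ==================== Galois-theoretic machinery ====================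

section Gal0
variable {A : Type*} [Field A] [NumberField A]
variable {M F1 F2 : IntermediateField A (AlgebraicClosure A)}

local notation "Om" => AlgebraicClosure A

/-- Promote an `↥S`-algebra automorphism of `Om` to an `A`-algebra automorphism. -/
noncomputable def downA (S : IntermediateField A Om) (σ : Om ≃ₐ[↥S] Om) : Om ≃ₐ[A] Om :=
  AlgEquiv.ofRingEquiv (f := σ.toRingEquiv) (fun r => by
    rw [IsScalarTower.algebraMap_apply A ↥S Om]
    exact σ.commutes _)

@[simp] lemma downA_apply (S : IntermediateField A Om) (σ : Om ≃ₐ[↥S] Om) (x : Om) :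
    downA S σ x = σ x := rfl

lemma maps_into_F1 (hMF1 : M ≤ F1)
    (hn : Normal ↥M ↥(extendScalars hMF1))
    (σ : Om ≃ₐ[A] Om) (hfix : ∀ x : Om, x ∈ M → σ x = x) :
    ∀ x ∈ F1, σ x ∈ F1 := by
  haveI := hn
  let σM : Om ≃ₐ[↥M] Om :=
    AlgEquiv.ofRingEquiv (f := σ.toRingEquiv) (fun c => hfix c.1 c.2)
  have h := IntermediateField.normal_iff_forall_map_le'.mp hn σM
  intro x hx
  have : σM x ∈ (extendScalars hMF1).map (σM : Om →ₐ[↥M] Om) := ⟨x, hx, rfl⟩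
  exact h this

lemma normalY (hMF1 : M ≤ F1) (hMF2 : M ≤ F2)
    (hn : Normal ↥M ↥(extendScalars hMF1)) :
    Normal ↥F2 ↥(extendScalars (le_sup_left : F2 ≤ F2 ⊔ F1)) := by
  rw [IntermediateField.normal_iff_forall_map_le']
  intro σ
  rintro x ⟨y, hy, rfl⟩
  have hy' : y ∈ F2 ⊔ F1 := hy
  show σ y ∈ F2 ⊔ F1
  have hfixF2 : ∀ c ∈ F2, σ c = c := by
    intro c hc
    have : c = algebraMap ↥F2 Om ⟨c, hc⟩ := rfl
    rw [this]
    exact σ.commutes _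
  have hmap : (F2 ⊔ F1).map (downA F2 σ : Om →ₐ[A] Om) ≤ F2 ⊔ F1 := by
    rw [IntermediateField.map_sup]
    apply sup_le
    · rintro z ⟨w, hw, rfl⟩
      exact (le_sup_left : F2 ≤ F2 ⊔ F1) (by simpa [hfixF2 w hw] using hw : (downA F2 σ) w ∈ F2)
    · rintro z ⟨w, hw, rfl⟩
      exact (le_sup_right : F1 ≤ F2 ⊔ F1)
        (maps_into_F1 hMF1 hn (downA F2 σ) (fun c hc => hfixF2 c (hMF2 hc)) w hw)
  exact hmap ⟨y, hy', rfl⟩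
end Gal0

section Gal
variable {A : Type*} [Field A] [NumberField A]
variable {M F1 F2 : IntermediateField A (AlgebraicClosure A)}
local notation "Om" => AlgebraicClosure A

variable (F1 F2) in
noncomputable abbrev Yf : IntermediateField ↥F2 Om := extendScalars (le_sup_left : F2 ≤ F2 ⊔ F1)

noncomputable def iotaA (hMF1 : M ≤ F1) (hMF2 : M ≤ F2)
    (σ : ↥(Yf F1 F2) ≃ₐ[↥F2] ↥(Yf F1 F2)) :
    ↥(extendScalars hMF1) →ₐ[↥M] Om where
  toFun x := (σ ⟨x.1, (le_sup_right : F1 ≤ F2 ⊔ F1) x.2⟩ : Om)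
  map_one' := by
    show (σ ⟨(1 : ↥(extendScalars hMF1)).1, _⟩ : Om) = 1
    rw [show (⟨(1 : ↥(extendScalars hMF1)).1, _⟩ : ↥(Yf F1 F2)) = 1 from rfl, map_one]; rfl
  map_mul' x y := by
    show (σ ⟨(x * y).1, _⟩ : Om) = (σ ⟨x.1, _⟩ : Om) * (σ ⟨y.1, _⟩ : Om)
    rw [show (⟨(x*y).1, _⟩ : ↥(Yf F1 F2)) =
      ⟨x.1, (le_sup_right : F1 ≤ F2 ⊔ F1) x.2⟩ * ⟨y.1, (le_sup_right : F1 ≤ F2 ⊔ F1) y.2⟩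
      from rfl, map_mul]
    rfl
  map_zero' := by
    show (σ ⟨(0 : ↥(extendScalars hMF1)).1, _⟩ : Om) = 0
    rw [show (⟨(0 : ↥(extendScalars hMF1)).1, _⟩ : ↥(Yf F1 F2)) = 0 from rfl, map_zero]; rfl
  map_add' x y := by
    show (σ ⟨(x + y).1, _⟩ : Om) = (σ ⟨x.1, _⟩ : Om) + (σ ⟨y.1, _⟩ : Om)
    rw [show (⟨(x+y).1, _⟩ : ↥(Yf F1 F2)) =
      ⟨x.1, (le_sup_right : F1 ≤ F2 ⊔ F1) x.2⟩ + ⟨y.1, (le_sup_right : F1 ≤ F2 ⊔ F1) y.2⟩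
      from rfl, map_add]
    rfl
  commutes' c := by
    show (σ ⟨(algebraMap ↥M ↥(extendScalars hMF1) c).1, _⟩ : Om) = algebraMap ↥M Om c
    rw [show (⟨(algebraMap ↥M ↥(extendScalars hMF1) c).1, _⟩ : ↥(Yf F1 F2)) =
        algebraMap ↥F2 ↥(Yf F1 F2) ⟨c.1, hMF2 c.2⟩ from rfl, σ.commutes]
    rfl

end Gal

section Gal2
variable {A : Type*} [Field A] [NumberField A]
variable {M F1 F2 : IntermediateField A (AlgebraicClosure A)}
local notation "Om" => AlgebraicClosure A

lemma iotaA_mem (hMF1 : M ≤ F1) (hMF2 : M ≤ F2) [Normal ↥M ↥(extendScalars hMF1)]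
    (σ : ↥(Yf F1 F2) ≃ₐ[↥F2] ↥(Yf F1 F2)) (x : ↥(extendScalars hMF1)) :
    iotaA hMF1 hMF2 σ x ∈ extendScalars hMF1 := by
  exact (AlgHom.fieldRange_of_normal (iotaA hMF1 hMF2 σ)).le ⟨x, rfl⟩

noncomputable def rhoE (hMF1 : M ≤ F1) (hMF2 : M ≤ F2)
    [Normal ↥M ↥(extendScalars hMF1)]
    (σ : ↥(Yf F1 F2) ≃ₐ[↥F2] ↥(Yf F1 F2)) :
    ↥(extendScalars hMF1) ≃ₐ[↥M] ↥(extendScalars hMF1) :=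
  AlgEquiv.ofBijective
    ((iotaA hMF1 hMF2 σ).codRestrict (extendScalars hMF1).toSubalgebra
      (iotaA_mem hMF1 hMF2 σ))
    ⟨(AlgHom.injective_codRestrict _ _ _).mpr (iotaA hMF1 hMF2 σ).toRingHom.injective,
     fun y => by
      have hy : (y : Om) ∈ (iotaA hMF1 hMF2 σ).fieldRange := by
        rw [AlgHom.fieldRange_of_normal (iotaA hMF1 hMF2 σ)]; exact y.2
      obtain ⟨x, hx⟩ := hy
      exact ⟨x, Subtype.ext hx⟩⟩

lemma rhoE_apply (hMF1 : M ≤ F1) (hMF2 : M ≤ F2) [Normal ↥M ↥(extendScalars hMF1)]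
    (σ : ↥(Yf F1 F2) ≃ₐ[↥F2] ↥(Yf F1 F2)) (x : ↥(extendScalars hMF1)) :
    (rhoE hMF1 hMF2 σ x : Om) = (σ ⟨x.1, (le_sup_right : F1 ≤ F2 ⊔ F1) x.2⟩ : Om) := rfl

noncomputable def rHom (hMF1 : M ≤ F1) (hMF2 : M ≤ F2) [Normal ↥M ↥(extendScalars hMF1)] :
    (↥(Yf F1 F2) ≃ₐ[↥F2] ↥(Yf F1 F2)) →* (↥(extendScalars hMF1) ≃ₐ[↥M] ↥(extendScalars hMF1)) :=
  MonoidHom.mk' (rhoE hMF1 hMF2) (fun σ τ => AlgEquiv.ext fun x => Subtype.ext rfl)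

lemma rHom_apply (hMF1 : M ≤ F1) (hMF2 : M ≤ F2) [Normal ↥M ↥(extendScalars hMF1)]
    (σ : ↥(Yf F1 F2) ≃ₐ[↥F2] ↥(Yf F1 F2)) (x : ↥(extendScalars hMF1)) :
    (rHom hMF1 hMF2 σ x : Om) = (σ ⟨x.1, (le_sup_right : F1 ≤ F2 ⊔ F1) x.2⟩ : Om) := rfl
end Gal2

section Gal3
variable {A : Type*} [Field A] [NumberField A]
variable {M F1 F2 : IntermediateField A (AlgebraicClosure A)}
local notation "Om" => AlgebraicClosure A

lemma eqTopOfF1 (T : IntermediateField ↥F2 ↥(Yf F1 F2))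
    (hT : ∀ x (hx : x ∈ F1), (⟨x, (le_sup_right : F1 ≤ F2 ⊔ F1) hx⟩ : ↥(Yf F1 F2)) ∈ T) :
    T = ⊤ := by
  have hW : F2 ⊔ F1 ≤ (T.map (Yf F1 F2).val).restrictScalars A := by
    apply sup_le
    · intro c hc
      exact ⟨algebraMap ↥F2 ↥(Yf F1 F2) ⟨c, hc⟩, T.algebraMap_mem _, rfl⟩
    · intro x hx
      exact ⟨⟨x, (le_sup_right : F1 ≤ F2 ⊔ F1) hx⟩, hT x hx, rfl⟩
  refine eq_top_iff.mpr fun y _ => ?_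
  obtain ⟨t, ht, hty⟩ := hW y.2
  exact (Subtype.ext hty : t = y) ▸ ht

lemma rHom_injective (hMF1 : M ≤ F1) (hMF2 : M ≤ F2) [Normal ↥M ↥(extendScalars hMF1)] :
    Function.Injective (rHom (F2 := F2) hMF1 hMF2) := by
  refine (injective_iff_map_eq_one _).mpr fun σ hσ => ?_
  have hfix : ∀ x : ↥(Yf F1 F2), x.1 ∈ F1 → σ x = x := by
    intro x hx
    have h1 := congrArg Subtype.val (AlgEquiv.ext_iff.mp hσ ⟨x.1, hx⟩)
    exact Subtype.ext (h1 : _ = _)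
  let T : IntermediateField ↥F2 ↥(Yf F1 F2) :=
    { AlgHom.equalizer (σ : ↥(Yf F1 F2) →ₐ[↥F2] ↥(Yf F1 F2)) (AlgHom.id ↥F2 ↥(Yf F1 F2)) with
      inv_mem' := fun y hy => by
        show σ y⁻¹ = y⁻¹
        rw [map_inv₀]
        exact congrArg Inv.inv (hy : σ y = y) }
  have hTtop : T = ⊤ := eqTopOfF1 T (fun x hx => hfix ⟨x, (le_sup_right : F1 ≤ F2 ⊔ F1) hx⟩ hx)
  apply AlgEquiv.ext
  intro y
  have hy : y ∈ T := by rw [hTtop]; exact IntermediateField.mem_top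
  exact (hy : σ y = y)
end Gal3

section Gal4
variable {A : Type*} [Field A] [NumberField A]
variable {M F1 F2 : IntermediateField A (AlgebraicClosure A)}
local notation "Om" => AlgebraicClosure A

lemma fixingSubgroup_bot' {F E : Type*} [Field F] [Field E] [Algebra F E] :
    IntermediateField.fixingSubgroup (⊥ : IntermediateField F E) = ⊤ := by
  refine eq_top_iff.mpr fun σ _ => ?_
  rw [IntermediateField.mem_fixingSubgroup_iff]
  rintro x hx
  obtain ⟨c, rfl⟩ := IntermediateField.mem_bot.mp hx
  exact σ.commutes c

lemma subgroup_eq_top_of_fixedField_le_bot {F E : Type*} [Field F] [Field E] [Algebra F E]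
    [FiniteDimensional F E] (H : Subgroup (E ≃ₐ[F] E))
    (h : IntermediateField.fixedField H ≤ ⊥) : H = ⊤ := by
  have h' : IntermediateField.fixedField H = ⊥ := le_antisymm h bot_le
  rw [← IntermediateField.fixingSubgroup_fixedField H, h', fixingSubgroup_bot']

lemma fixedField_top' {F E : Type*} [Field F] [Field E] [Algebra F E]
    [FiniteDimensional F E] [IsGalois F E] :
    IntermediateField.fixedField (⊤ : Subgroup (E ≃ₐ[F] E)) = ⊥ := by
  rw [← fixingSubgroup_bot', IsGalois.fixedField_fixingSubgroup]

lemma mem_fixedField_iff' {F E : Type*} [Field F] [Field E] [Algebra F E]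
    (H : Subgroup (E ≃ₐ[F] E)) (x : E) :
    x ∈ IntermediateField.fixedField H ↔ ∀ g : H, (g : E ≃ₐ[F] E) x = x := Iff.rfl
end Gal4

section Gal5
variable {A : Type*} [Field A] [NumberField A]
variable {M F1 F2 : IntermediateField A (AlgebraicClosure A)}
local notation "Om" => AlgebraicClosure A

lemma rHom_surjective (hMF1 : M ≤ F1) (hMF2 : M ≤ F2)
    [Normal ↥M ↥(extendScalars hMF1)]
    [FiniteDimensional ↥M ↥(extendScalars hMF1)]
    [FiniteDimensional ↥F2 ↥(Yf F1 F2)] [IsGalois ↥F2 ↥(Yf F1 F2)]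
    (hM2 : F1 ⊓ F2 = M) :
    Function.Surjective (rHom (F2 := F2) hMF1 hMF2) := by
  rw [← MonoidHom.range_eq_top]
  apply subgroup_eq_top_of_fixedField_le_bot
  intro x hx
  have hxF2 : x.1 ∈ F2 := by
    have hY : (⟨x.1, (le_sup_right : F1 ≤ F2 ⊔ F1) x.2⟩ : ↥(Yf F1 F2)) ∈
        IntermediateField.fixedField (⊤ : Subgroup (↥(Yf F1 F2) ≃ₐ[↥F2] ↥(Yf F1 F2))) := by
      rw [mem_fixedField_iff']
      rintro ⟨σ, -⟩
      have h5 : rHom hMF1 hMF2 σ x = x := hx ⟨rHom hMF1 hMF2 σ, ⟨σ, rfl⟩⟩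
      have h6 := congrArg Subtype.val h5
      rw [rHom_apply] at h6
      exact Subtype.ext h6
    rw [fixedField_top'] at hY
    obtain ⟨c, hc⟩ := IntermediateField.mem_bot.mp hY
    have : (c : Om) = x.1 := congrArg Subtype.val hc
    exact this ▸ c.2
  have hxM : x.1 ∈ M := hM2.le (IntermediateField.mem_inf.mpr ⟨x.2, hxF2⟩)
  exact IntermediateField.mem_bot.mpr ⟨⟨x.1, hxM⟩, Subtype.ext rfl⟩

lemma exists_mem_inf_not_mem (hMF1 : M ≤ F1) (hMF2 : M ≤ F2)
    [Normal ↥M ↥(extendScalars hMF1)]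
    [FiniteDimensional ↥M ↥(extendScalars hMF1)]
    [FiniteDimensional ↥F2 ↥(Yf F1 F2)] [IsGalois ↥F2 ↥(Yf F1 F2)]
    (E : IntermediateField A Om) (hF2E : F2 < E) (hEY : E ≤ F2 ⊔ F1) :
    ∃ x : Om, x ∈ F1 ∧ x ∈ E ∧ x ∉ M := by
  by_contra hcon
  push_neg at hcon
  have hFE : ∀ x : Om, x ∈ F1 → x ∈ E → x ∈ M := hcon
  -- E as an intermediate field of Y over F2
  let E' : IntermediateField ↥F2 ↥(Yf F1 F2) :=
    IntermediateField.comap (Yf F1 F2).val (extendScalars hF2E.le)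
  have hE'mem : ∀ y : ↥(Yf F1 F2), y ∈ E' ↔ y.1 ∈ E := fun y => Iff.rfl
  let J : Subgroup (↥(Yf F1 F2) ≃ₐ[↥F2] ↥(Yf F1 F2)) := IntermediateField.fixingSubgroup E'
  -- step 1 : the image of J under rHom has trivial fixed field
  have h1 : J.map (rHom hMF1 hMF2) = ⊤ := by
    apply subgroup_eq_top_of_fixedField_le_bot
    intro x hx
    have hxE : x.1 ∈ E := by
      have hY : (⟨x.1, (le_sup_right : F1 ≤ F2 ⊔ F1) x.2⟩ : ↥(Yf F1 F2)) ∈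
          IntermediateField.fixedField J := by
        rw [mem_fixedField_iff']
        rintro ⟨σ, hσ⟩
        have h5 : rHom hMF1 hMF2 σ x = x :=
          hx ⟨rHom hMF1 hMF2 σ, Subgroup.mem_map.mpr ⟨σ, hσ, rfl⟩⟩
        have h6 := congrArg Subtype.val h5
        rw [rHom_apply] at h6
        exact Subtype.ext h6
      rw [IsGalois.fixedField_fixingSubgroup E'] at hY
      exact (hE'mem _).mp hY
    have hxM : x.1 ∈ M := hFE x.1 x.2 hxE
    exact IntermediateField.mem_bot.mpr ⟨⟨x.1, hxM⟩, Subtype.ext rfl⟩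
  -- step 2 : J = ⊤
  have h2 : J = ⊤ := by
    refine eq_top_iff.mpr fun σ _ => ?_
    have : rHom hMF1 hMF2 σ ∈ J.map (rHom hMF1 hMF2) := by rw [h1]; exact Subgroup.mem_top _
    obtain ⟨τ, hτ, hτσ⟩ := Subgroup.mem_map.mp this
    exact rHom_injective hMF1 hMF2 hτσ ▸ hτ
  -- step 3 : E' ≤ ⊥, hence E ≤ F2
  have h3 : E' ≤ ⊥ := by
    have : E' ≤ IntermediateField.fixedField J :=
      (IntermediateField.le_iff_le J E').mpr le_rfl
    rwa [h2, fixedField_top'] at this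
  have h4 : E ≤ F2 := by
    intro x hxE
    have : (⟨x, hEY hxE⟩ : ↥(Yf F1 F2)) ∈ E' := (hE'mem _).mpr hxE
    obtain ⟨c, hc⟩ := IntermediateField.mem_bot.mp (h3 this)
    have : (c : Om) = x := congrArg Subtype.val hc
    exact this ▸ c.2
  exact hF2E.ne (le_antisymm hF2E.le h4)
end Gal5


-- ==================== main theorem ====================

/-- **Lemma 4.2(i).** Let `M` be a finite extension of a number field `A`, and `F₁, F₂` finite
extensions of `M` inside a fixed algebraic closure of `A`. Suppose `F₁` is Galois over `M` and
there is a prime `𝔭` of `A` that does not ramify in `F₂` but ramifies in every nontrivial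
extension of `M` contained in `F₁`. Then `Gal(F₁F₂/F₂) ≅ Gal(F₁/M)`, and `𝔭` ramifies in
every nontrivial extension of `F₂` contained in `F₁F₂`. -/
theorem ramified_linear_disjointness (A : Type*) [Field A] [NumberField A]
    (M F1 F2 : IntermediateField A (AlgebraicClosure A))
    [FiniteDimensional A ↥M] [FiniteDimensional A ↥F1] [FiniteDimensional A ↥F2]
    (hMF1 : M ≤ F1) (hMF2 : M ≤ F2)
    (hGal : IsGalois ↥M ↥(IntermediateField.extendScalars hMF1))
    (v : HeightOneSpectrum (𝓞 A))
    (hunram : UnramifiedIn (algebraMap A ↥F2) v)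
    (hram : ∀ E : IntermediateField A (AlgebraicClosure A), M < E → E ≤ F1 →
      RamifiesIn (algebraMap A ↥E) v) :
    Nonempty (relGal F2 F1 ≃* relGal M F1) ∧
      ∀ E : IntermediateField A (AlgebraicClosure A), F2 < E → E ≤ F2 ⊔ F1 →
        RamifiesIn (algebraMap A ↥E) v := by
  haveI := hGal
  haveI : Normal ↥M ↥(extendScalars hMF1) := hGal.to_normal
  haveI : FiniteDimensional A ↥(extendScalars hMF1) :=
    (inferInstance : FiniteDimensional A ↥F1)
  haveI : FiniteDimensional ↥M ↥(extendScalars hMF1) :=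
    Module.Finite.of_restrictScalars_finite A ↥M _
  haveI : Normal ↥F2 ↥(Yf F1 F2) := normalY hMF1 hMF2 inferInstance
  haveI : FiniteDimensional A ↥(Yf F1 F2) :=
    (inferInstance : FiniteDimensional A ↥(F2 ⊔ F1))
  haveI : FiniteDimensional ↥F2 ↥(Yf F1 F2) :=
    Module.Finite.of_restrictScalars_finite A ↥F2 _
  haveI : IsGalois ↥F2 ↥(Yf F1 F2) := ⟨⟩
  haveI : NumberField ↥M := NumberField.of_module_finite A ↥M
  haveI : NumberField ↥F1 := NumberField.of_module_finite A ↥F1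
  haveI : NumberField ↥F2 := NumberField.of_module_finite A ↥F2
  -- transfer ramification data along inclusions of intermediate fields
  have key_unram : ∀ (E E' : IntermediateField A (AlgebraicClosure A)) (h : E ≤ E'),
      ∀ [FiniteDimensional A ↥E] [FiniteDimensional A ↥E'],
      UnramifiedIn (algebraMap A ↥E') v → UnramifiedIn (algebraMap A ↥E) v := by
    intro E E' h _ _ hu
    haveI : NumberField ↥E := NumberField.of_module_finite A ↥E
    haveI : NumberField ↥E' := NumberField.of_module_finite A ↥E'
    have heq : algebraMap A ↥E' =
        ((IntermediateField.inclusion h : ↥E →ₐ[A] ↥E') : ↥E →+* ↥E').comp (algebraMap A ↥E) :=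
      RingHom.ext fun a => Subtype.ext rfl
    rw [heq] at hu
    exact UnramifiedIn.comp' _ _ v hu
  have key_ram : ∀ (E E' : IntermediateField A (AlgebraicClosure A)) (h : E ≤ E'),
      ∀ [FiniteDimensional A ↥E] [FiniteDimensional A ↥E'],
      RamifiesIn (algebraMap A ↥E) v → RamifiesIn (algebraMap A ↥E') v := by
    intro E E' h _ _ hr
    haveI : NumberField ↥E := NumberField.of_module_finite A ↥E
    haveI : NumberField ↥E' := NumberField.of_module_finite A ↥E'
    have heq : algebraMap A ↥E' =
        ((IntermediateField.inclusion h : ↥E →ₐ[A] ↥E') : ↥E →+* ↥E').comp (algebraMap A ↥E) :=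
      RingHom.ext fun a => Subtype.ext rfl
    rw [heq]
    exact RamifiesIn.comp' _ _ v hr
  -- F1 ⊓ F2 = M
  haveI : FiniteDimensional A ↥(F1 ⊓ F2) :=
    FiniteDimensional.of_injective (IntermediateField.inclusion
      (inf_le_left : F1 ⊓ F2 ≤ F1)).toLinearMap
      (IntermediateField.inclusion (inf_le_left : F1 ⊓ F2 ≤ F1)).injective
  have hM2 : F1 ⊓ F2 = M := by
    by_contra hne
    have hlt : M < F1 ⊓ F2 :=
      lt_of_le_of_ne (le_inf hMF1 hMF2) (fun h => hne h.symm)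
    have h1 := hram (F1 ⊓ F2) hlt inf_le_left
    have h2 := key_unram (F1 ⊓ F2) F2 inf_le_right hunram
    exact not_ramifiesIn_of_unramifiedIn _ v h2 h1
  constructor
  · -- the isomorphism of Galois groups
    have h7 : (extendScalars (le_sup_left : M ≤ M ⊔ F1)) = extendScalars hMF1 := by
      ext x
      simp only [mem_extendScalars]
      rw [sup_eq_right.mpr hMF1]
    exact ⟨(MulEquiv.ofBijective (rHom hMF1 hMF2)
      ⟨rHom_injective hMF1 hMF2, rHom_surjective hMF1 hMF2 hM2⟩).trans
      (AlgEquiv.autCongr (equivOfEq h7)).symm⟩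
  · -- ramification in every nontrivial subextension of F₂ in F₂F₁
    intro E hF2E hEY
    obtain ⟨x, hxF1, hxE, hxM⟩ := exists_mem_inf_not_mem hMF1 hMF2 E hF2E hEY
    haveI : FiniteDimensional A ↥(F1 ⊓ E) :=
      FiniteDimensional.of_injective (IntermediateField.inclusion
        (inf_le_left : F1 ⊓ E ≤ F1)).toLinearMap
        (IntermediateField.inclusion (inf_le_left : F1 ⊓ E ≤ F1)).injective
    haveI : FiniteDimensional A ↥E :=
      FiniteDimensional.of_injective (IntermediateField.inclusion hEY).toLinearMap
        (IntermediateField.inclusion hEY).injective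
    have hlt : M < F1 ⊓ E := by
      refine lt_of_le_of_ne (le_inf hMF1 (hMF2.trans hF2E.le)) (fun h => hxM ?_)
      rw [h]
      exact IntermediateField.mem_inf.mpr ⟨hxF1, hxE⟩
    have h1 := hram (F1 ⊓ E) hlt inf_le_left
    exact key_ram (F1 ⊓ E) E inf_le_right h1
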